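/- arXiv:2410.20379 — 5 statements merged into one kernel-verified Lean document; each statement's English description precedes it below -/
import Mathlib

section
/- If Π_B > Π_G + C_B or Π_B < Π_G − C_G (with C_B + C_G > 0), then the equation x + (1−x)·e^{β(Π_B−Π_G+C_G)} = x·e^{β(Π_G−Π_B+C_B)} + (1−x) has no solution x in the open interval (0,1). -/
theorem stmt9 (β PB PG CB CG : ℝ) (hβ : 0 < β) (hCB : 0 ≤ CB) (hCG : 0 ≤ CG)
    (hC : 0 < CB ∨ 0 < CG) (h : PB > PG + CB ∨ PB < PG - CG) :
    ∀ x ∈ Set.Ioo (0:ℝ) 1,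
      x + (1 - x) * Real.exp (β * (PB - PG + CG))
        ≠ x * Real.exp (β * (PG - PB + CB)) + (1 - x) := by
  rintro x ⟨hx0, hx1⟩
  have hx1' : 0 < 1 - x := by linarith
  rcases h with h | h
  · have hea : 1 < Real.exp (β * (PB - PG + CG)) := by
      rw [Real.one_lt_exp_iff]; exact mul_pos hβ (by linarith)
    have heb : Real.exp (β * (PG - PB + CB)) < 1 := by
      rw [Real.exp_lt_one_iff]
      exact mul_neg_of_pos_of_neg hβ (by linarith)
    nlinarith
  · have hea : Real.exp (β * (PB - PG + CG)) < 1 := by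
      rw [Real.exp_lt_one_iff]
      exact mul_neg_of_pos_of_neg hβ (by linarith)
    have heb : 1 < Real.exp (β * (PG - PB + CB)) := by
      rw [Real.one_lt_exp_iff]
      exact mul_pos hβ (by linarith)
    nlinarith
end

section
/- If 2(Π_G − Π_B) + C_B − C_G < 0, then η*(β) = (e^{β(Π_B−Π_G+C_G)} − 1)/(e^{β(Π_B−Π_G+C_G)} − 1 + e^{β(Π_G−Π_B+C_B)} − 1) tends to 1 as β → +∞; if 2(Π_G − Π_B) + C_B − C_G > 0, then η*(β) tends to 0 as β → +∞. -/
/-! With `a = Π_B - Π_G + C_G` and `b = Π_G - Π_B + C_B` one has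
`2 (Π_G - Π_B) + C_B - C_G = b - a`, so its sign says which of `X = e^{βa} - 1` and
`Y = e^{βb} - 1` dominates. For `0 < a` and `b < a`,
`(e^{βb} - 1) / (e^{βa} - 1) = (e^{β(b-a)} - e^{-βa}) / (1 - e^{-βa}) → 0`,
so in `η* = X / (X + Y)` the dominated term is negligible. -/

open Filter Topology Real

section DivAdd

variable {α 𝕜 : Type*} [NormedField 𝕜] {l : Filter α} {X Y : α → 𝕜}

lemma tendsto_div_add_nhds_one (h : Tendsto (fun x => Y x / X x) l (𝓝 0))
    (hX : ∀ᶠ x in l, X x ≠ 0) : Tendsto (fun x => X x / (X x + Y x)) l (𝓝 1) := by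
  have hlim : Tendsto (fun x => (1 + Y x / X x)⁻¹) l (𝓝 1) := by
    simpa using (tendsto_const_nhds.add h).inv₀ (by norm_num : (1 : 𝕜) + 0 ≠ 0)
  refine hlim.congr' ?_
  filter_upwards [hX] with x hx
  rw [one_add_div hx, inv_div]

lemma tendsto_div_add_nhds_zero (h : Tendsto (fun x => X x / Y x) l (𝓝 0))
    (hY : ∀ᶠ x in l, Y x ≠ 0) : Tendsto (fun x => X x / (X x + Y x)) l (𝓝 0) := by
  have hlim : Tendsto (fun x => X x / Y x / (X x / Y x + 1)) l (𝓝 0) := by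
    simpa [Pi.div_def] using h.div (h.add tendsto_const_nhds) (by norm_num : (0 : 𝕜) + 1 ≠ 0)
  refine hlim.congr' ?_
  filter_upwards [hY] with x hy
  rw [div_add_one hy, div_div_div_cancel_right₀ hy]

end DivAdd

lemma tendsto_exp_mul_atTop_nhds_zero {c : ℝ} (hc : c < 0) :
    Tendsto (fun β : ℝ => exp (β * c)) atTop (𝓝 0) :=
  tendsto_exp_atBot.comp (tendsto_id.atTop_mul_const_of_neg hc)

lemma eventually_exp_mul_sub_one_ne_zero {a : ℝ} (ha : 0 < a) :
    ∀ᶠ β : ℝ in atTop, exp (β * a) - 1 ≠ 0 := by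
  filter_upwards [eventually_gt_atTop 0] with β hβ
  rw [sub_ne_zero, Ne, exp_eq_one_iff]
  positivity

lemma tendsto_exp_mul_sub_one_div_exp_mul_sub_one {a b : ℝ} (ha : 0 < a) (hba : b < a) :
    Tendsto (fun β : ℝ => (exp (β * b) - 1) / (exp (β * a) - 1)) atTop (𝓝 0) := by
  have hlim : Tendsto (fun β : ℝ => (exp (β * (b - a)) - exp (β * -a)) / (1 - exp (β * -a)))
      atTop (𝓝 0) := by
    have hneg := tendsto_exp_mul_atTop_nhds_zero (neg_neg_of_pos ha)
    simpa [Pi.div_def] using ((tendsto_exp_mul_atTop_nhds_zero (sub_neg.mpr hba)).sub hneg).div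
      (tendsto_const_nhds.sub hneg) (by norm_num : (1 : ℝ) - 0 ≠ 0)
  refine hlim.congr fun β => ?_
  rw [← mul_div_mul_left _ _ (exp_pos (β * a)).ne']
  simp only [mul_sub, mul_one, ← exp_add, mul_neg, add_neg_cancel, exp_zero,
    add_sub_cancel]

theorem stmt11_general (PB PG CB CG : ℝ) (h1 : PG + CB > PB) (h2 : PB > PG - CG) :
    (2 * (PG - PB) + CB - CG < 0 →
      Filter.Tendsto
        (fun β : ℝ => (Real.exp (β * (PB - PG + CG)) - 1) /
          (Real.exp (β * (PB - PG + CG)) - 1 + (Real.exp (β * (PG - PB + CB)) - 1)))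
        Filter.atTop (nhds 1)) ∧
    (2 * (PG - PB) + CB - CG > 0 →
      Filter.Tendsto
        (fun β : ℝ => (Real.exp (β * (PB - PG + CG)) - 1) /
          (Real.exp (β * (PB - PG + CG)) - 1 + (Real.exp (β * (PG - PB + CB)) - 1)))
        Filter.atTop (nhds 0)) := by
  have ha : 0 < PB - PG + CG := by linarith
  have hb : 0 < PG - PB + CB := by linarith
  refine ⟨fun h => ?_, fun h => ?_⟩
  · exact tendsto_div_add_nhds_one
      (tendsto_exp_mul_sub_one_div_exp_mul_sub_one ha (by linarith))
      (eventually_exp_mul_sub_one_ne_zero ha)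
  · exact tendsto_div_add_nhds_zero
      (tendsto_exp_mul_sub_one_div_exp_mul_sub_one hb (by linarith))
      (eventually_exp_mul_sub_one_ne_zero hb)

theorem stmt11 (PB PG CB CG : ℝ) (hCB : 0 ≤ CB) (hCG : 0 ≤ CG)
    (hC : 0 < CB + CG) (h1 : PG + CB > PB) (h2 : PB > PG - CG) :
    (2 * (PG - PB) + CB - CG < 0 →
      Filter.Tendsto
        (fun β : ℝ => (Real.exp (β * (PB - PG + CG)) - 1) /
          (Real.exp (β * (PB - PG + CG)) - 1 + (Real.exp (β * (PG - PB + CB)) - 1)))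
        Filter.atTop (nhds 1)) ∧
    (2 * (PG - PB) + CB - CG > 0 →
      Filter.Tendsto
        (fun β : ℝ => (Real.exp (β * (PB - PG + CG)) - 1) /
          (Real.exp (β * (PB - PG + CG)) - 1 + (Real.exp (β * (PG - PB + CB)) - 1)))
        Filter.atTop (nhds 0)) :=
  stmt11_general PB PG CB CG h1 h2
end

section
/- For any β > 0 and x in (0,1), η*(β) can be rewritten as 1 / (1 + (e^{β(2(Π_G−Π_B)+C_B−C_G)} − e^{−β(Π_B−Π_G+C_G)})/(1 − e^{−β(Π_B−Π_G+C_G)})), and in particular η*(β) is strictly monotone decreasing in β when 2(Π_G−Π_B)+C_B−C_G > 0. -/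
/-!
Write `a = Π_B − Π_G + C_G > 0` and `b = Π_G − Π_B + C_B`. Then
`η*(β) = 1 / (1 + (e^{βb} − 1) / (e^{βa} − 1))`, and multiplying the inner fraction through by
`e^{−βa}` gives the stated form. When `b > a`, put `u = e^{βa}` and `p = b / a > 1`: the inner
fraction is `(u^p − 1) / (u − 1)`, the slope of the secant of the strictly convex `u ↦ u^p`
through `1`, which strictly increases with `u` and hence with `β`.
-/

open Real Set

noncomputable def etaStar (PB PG CB CG β : ℝ) : ℝ :=
  (Real.exp (β * (PB - PG + CG)) - 1) /
    (Real.exp (β * (PB - PG + CG)) - 1 + (Real.exp (β * (PG - PB + CB)) - 1))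

lemma div_add_eq_one_div_one_add_div {K : Type*} [Field K] {x y : K} (hx : x ≠ 0) :
    x / (x + y) = 1 / (1 + y / x) := by
  rw [one_add_div hx, one_div_div]

lemma rpow_secant_strictMonoOn {p : ℝ} (hp : 1 < p) :
    StrictMonoOn (fun u : ℝ => (u ^ p - 1) / (u - 1)) (Ioi 1) := by
  rintro x (hx : 1 < x) y (hy : 1 < y) hxy
  have h := (strictConvexOn_rpow hp).secant_strict_mono (a := 1)
    (mem_Ici.2 zero_le_one) (mem_Ici.2 (zero_le_one.trans hx.le))
    (mem_Ici.2 (zero_le_one.trans hy.le)) hx.ne' hy.ne' hxy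
  simpa only [one_rpow] using h

lemma exp_sub_one_div_exp_sub_one_strictMonoOn {a b : ℝ} (ha : 0 < a) (hab : a < b) :
    StrictMonoOn (fun β : ℝ => (exp (β * b) - 1) / (exp (β * a) - 1)) (Ioi 0) := by
  have hexp : ∀ β, exp (β * b) = exp (β * a) ^ (b / a) := fun β => by
    rw [← exp_mul, mul_assoc, mul_div_cancel₀ b ha.ne']
  intro β₁ hβ₁ β₂ hβ₂ h
  simp only [hexp]
  exact rpow_secant_strictMonoOn ((one_lt_div ha).2 hab)
    (one_lt_exp_iff.2 (mul_pos hβ₁ ha)) (one_lt_exp_iff.2 (mul_pos hβ₂ ha))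
    (exp_lt_exp.2 (mul_lt_mul_of_pos_right h ha))

lemma exp_sub_one_div_exp_sub_one (x y : ℝ) :
    (exp y - 1) / (exp x - 1) = (exp (y - x) - exp (-x)) / (1 - exp (-x)) := by
  rw [← mul_div_mul_right _ _ (exp_ne_zero (-x)), exp_sub, exp_neg]
  field_simp

lemma etaStar_eq_one_div_one_add {PB PG CB CG β : ℝ} (hβ : β ≠ 0) (ha : PB - PG + CG ≠ 0) :
    etaStar PB PG CB CG β =
      1 / (1 + (exp (β * (PG - PB + CB)) - 1) / (exp (β * (PB - PG + CG)) - 1)) :=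
  div_add_eq_one_div_one_add_div <| sub_ne_zero.2 <| (exp_eq_one_iff _).not.2 (mul_ne_zero hβ ha)

theorem stmt12_general (PB PG CB CG : ℝ) (h2 : PB > PG - CG) :
    (∀ β : ℝ, 0 < β →
      etaStar PB PG CB CG β =
        1 / (1 + (Real.exp (β * (2 * (PG - PB) + CB - CG))
            - Real.exp (-(β * (PB - PG + CG)))) /
          (1 - Real.exp (-(β * (PB - PG + CG)))))) ∧
    (2 * (PG - PB) + CB - CG > 0 →
      StrictAntiOn (etaStar PB PG CB CG) (Set.Ioi 0)) := by
  have ha : 0 < PB - PG + CG := by linarith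
  refine ⟨fun β hβ => ?_, fun hba => ?_⟩
  · rw [etaStar_eq_one_div_one_add hβ.ne' ha.ne', exp_sub_one_div_exp_sub_one,
      show β * (PG - PB + CB) - β * (PB - PG + CG) = β * (2 * (PG - PB) + CB - CG) by ring]
  · have hab : PB - PG + CG < PG - PB + CB := by linarith
    rintro β₁ (hβ₁ : 0 < β₁) β₂ (hβ₂ : 0 < β₂) h
    rw [etaStar_eq_one_div_one_add hβ₁.ne' ha.ne', etaStar_eq_one_div_one_add hβ₂.ne' ha.ne']
    have hratio_pos : 0 < (exp (β₁ * (PG - PB + CB)) - 1) / (exp (β₁ * (PB - PG + CG)) - 1) :=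
      div_pos (sub_pos.2 (one_lt_exp_iff.2 (mul_pos hβ₁ (ha.trans hab))))
        (sub_pos.2 (one_lt_exp_iff.2 (mul_pos hβ₁ ha)))
    exact one_div_lt_one_div_of_lt (by positivity) <| add_lt_add_right
      (exp_sub_one_div_exp_sub_one_strictMonoOn ha hab hβ₁ hβ₂ h) 1

theorem stmt12 (PB PG CB CG : ℝ) (hCB : 0 ≤ CB) (hCG : 0 ≤ CG)
    (hC : 0 < CB + CG) (h1 : PG + CB > PB) (h2 : PB > PG - CG) :
    (∀ β : ℝ, 0 < β →
      etaStar PB PG CB CG β =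
        1 / (1 + (Real.exp (β * (2 * (PG - PB) + CB - CG))
            - Real.exp (-(β * (PB - PG + CG)))) /
          (1 - Real.exp (-(β * (PB - PG + CG)))))) ∧
    (2 * (PG - PB) + CB - CG > 0 →
      StrictAntiOn (etaStar PB PG CB CG) (Set.Ioi 0)) :=
  stmt12_general PB PG CB CG h2
end

section
/- The derivative of the adjusted replicator map g at x = 0 equals exp(β(Π_G − C_G − Π_B)); consequently 0 is a hyperbolically attracting fixed point (derivative strictly between 0 and 1) if and only if Π_B > Π_G − C_G. -/
/-!
Write `a = exp (β (Π_B − Π_G − C_B))` and `b = exp (β (Π_B − Π_G + C_G))`, so that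
`g x = x² / (x + (1 − x) a) + x (1 − x) / (x + (1 − x) b)`. Both denominators equal the nonzero
constants `a`, `b` at `0`; the first summand vanishes to second order there and the second has
slope `1 / b`. Hence `g' 0 = b⁻¹ = exp (β (Π_G − C_G − Π_B))`, which lies in `(0, 1)` exactly when
its exponent is negative, i.e. (as `β > 0`) when `Π_B > Π_G − C_G`.
-/

noncomputable def g13 (β PB PG CB CG x : ℝ) : ℝ :=
  x ^ 2 / (x + (1 - x) * Real.exp (β * (PB - PG - CB))) +
    x * (1 - x) / (x + (1 - x) * Real.exp (β * (PB - PG + CG)))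

section Interpolation

variable {𝕜 : Type*} [NontriviallyNormedField 𝕜]

theorem hasDerivAt_add_one_sub_mul (a x : 𝕜) :
    HasDerivAt (fun x => x + (1 - x) * a) (1 - a) x :=
  ((hasDerivAt_id' x).fun_add (((hasDerivAt_id' x).const_sub 1).mul_const a)).congr_deriv
    (by ring)

theorem hasDerivAt_sq_div_add_one_sub_mul_zero {a : 𝕜} (ha : a ≠ 0) :
    HasDerivAt (fun x => x ^ 2 / (x + (1 - x) * a)) 0 0 :=
  ((hasDerivAt_pow 2 (0 : 𝕜)).fun_div (hasDerivAt_add_one_sub_mul a 0)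
    (by simpa using ha)).congr_deriv (by simp)

theorem hasDerivAt_mul_one_sub_div_add_one_sub_mul_zero {b : 𝕜} (hb : b ≠ 0) :
    HasDerivAt (fun x => x * (1 - x) / (x + (1 - x) * b)) b⁻¹ 0 :=
  (((hasDerivAt_id' (0 : 𝕜)).fun_mul ((hasDerivAt_id' 0).const_sub 1)).fun_div
    (hasDerivAt_add_one_sub_mul b 0) (by simpa using hb)).congr_deriv (by simp [sq])

end Interpolation

theorem hasDerivAt_g13_zero (β PB PG CB CG : ℝ) :
    HasDerivAt (g13 β PB PG CB CG) (Real.exp (β * (PG - CG - PB))) 0 := by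
  have h :=
    (hasDerivAt_sq_div_add_one_sub_mul_zero (Real.exp_pos (β * (PB - PG - CB))).ne').fun_add
      (hasDerivAt_mul_one_sub_div_add_one_sub_mul_zero (Real.exp_pos (β * (PB - PG + CG))).ne')
  rw [zero_add, ← Real.exp_neg] at h
  exact h.congr_deriv (by congr 1; ring)

theorem stmt13_general (β PB PG CB CG : ℝ) (hβ : 0 < β) :
    deriv (g13 β PB PG CB CG) 0 = Real.exp (β * (PG - CG - PB)) ∧
      (deriv (g13 β PB PG CB CG) 0 ∈ Set.Ioo (0:ℝ) 1 ↔ PB > PG - CG) := by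
  have hderiv := (hasDerivAt_g13_zero β PB PG CB CG).deriv
  refine ⟨hderiv, ?_⟩
  rw [hderiv, Set.mem_Ioo, and_iff_right (Real.exp_pos _), Real.exp_lt_one_iff, ← smul_eq_mul,
    smul_neg_iff_of_pos_left hβ, sub_neg, gt_iff_lt]

theorem stmt13 (β PB PG CB CG : ℝ) (hβ : 0 < β) (hCB : 0 ≤ CB) (hCG : 0 ≤ CG) :
    deriv (g13 β PB PG CB CG) 0 = Real.exp (β * (PG - CG - PB)) ∧
      (deriv (g13 β PB PG CB CG) 0 ∈ Set.Ioo (0:ℝ) 1 ↔ PB > PG - CG) :=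
  stmt13_general β PB PG CB CG hβ
end

section
/- The unit square [0,1]² is invariant under the two-dimensional adjusted replicator map F: if (x,y) ∈ [0,1]² then F(x,y) ∈ [0,1]². -/
noncomputable def F1 (β a b CB CG x y : ℝ) : ℝ :=
  x ^ 2 / (x + (1 - x) * Real.exp (β * (a * y + b - CB))) +
    x * (1 - x) / (x + (1 - x) * Real.exp (β * (a * y + b + CG)))


lemma F1_mem (β a b CB CG x y : ℝ) (hx0 : 0 ≤ x) (hx1 : x ≤ 1) :
    F1 β a b CB CG x y ∈ Set.Icc (0:ℝ) 1 := by
  unfold F1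
  set E1 := Real.exp (β * (a * y + b - CB)) with hE1
  set E2 := Real.exp (β * (a * y + b + CG)) with hE2
  have hE1p : 0 < E1 := Real.exp_pos _
  have hE2p : 0 < E2 := Real.exp_pos _
  have h1x : 0 ≤ 1 - x := by linarith
  have hD1 : 0 < x + (1 - x) * E1 := by
    rcases eq_or_lt_of_le hx0 with h | h
    · simp [← h]; nlinarith
    · nlinarith
  have hD2 : 0 < x + (1 - x) * E2 := by
    rcases eq_or_lt_of_le hx0 with h | h
    · simp [← h]; nlinarith
    · nlinarith
  constructor
  · positivity
  · rcases eq_or_lt_of_le hx0 with h | h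
    · simp [← h]
    · have hb1 : x ^ 2 / (x + (1 - x) * E1) ≤ x := by
        rw [div_le_iff₀ hD1]; nlinarith [mul_nonneg (mul_nonneg hx0 h1x) hE1p.le]
      have hb2 : x * (1 - x) / (x + (1 - x) * E2) ≤ 1 - x := by
        rw [div_le_iff₀ hD2]; nlinarith [mul_nonneg (mul_nonneg h1x h1x) hE2p.le]
      linarith


noncomputable def F (β a b CB CG : ℝ) (p : ℝ × ℝ) : ℝ × ℝ :=
  (F1 β a b CB CG p.1 p.2, F1 β a b CB CG p.2 p.1)

theorem stmt19 (β a b CB CG : ℝ) (hβ : 0 < β) (hCB : 0 ≤ CB) (hCG : 0 ≤ CG)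
    (p : ℝ × ℝ) (hp : p ∈ Set.Icc (0:ℝ) 1 ×ˢ Set.Icc (0:ℝ) 1) :
    F β a b CB CG p ∈ Set.Icc (0:ℝ) 1 ×ˢ Set.Icc (0:ℝ) 1 := by
  obtain ⟨h1, h2⟩ := hp
  exact ⟨F1_mem β a b CB CG p.1 p.2 h1.1 h1.2, F1_mem β a b CB CG p.2 p.1 h2.1 h2.2⟩
end
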